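/- arXiv:1602.08488 — 3 statements merged into one kernel-verified Lean document; each statement's English description precedes it below -/
import Mathlib

section
/- For every v ∈ ℝ^6, the sequence A^n·v converges, as n → ∞, to the constant vector whose every entry is (1/6)·(sum of entries of v). -/
/-!
Write `A = (J - I - S) / 4`, where `J` is the all-ones matrix and `S` swaps opposite faces.
Then `A` acts as `1` on constant vectors, as `-1/2` on mean-zero vectors fixed by `S`, and as
`0` on vectors negated by `S`; equivalently `A P = P A = P` and `A² = (3 P - A) / 2` for the
averaging projection `P = J / 6`. So `P` and `Q = 2 (P - A)` are orthogonal idempotents with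
`A = P - Q / 2`, whence `A ^ n = P + (-1/2) ^ n • Q` for `n ≥ 1`, which tends to `P`.
-/

open Matrix

/-- The 6×6 cube stealing matrix: faces 0..5 with opposite pairs (0,5),(1,3),(2,4);
entry is 1/4 for adjacent faces, 0 for equal or opposite faces. -/
noncomputable def cubeA : Matrix (Fin 6) (Fin 6) ℝ :=
  !![0, 1/4, 1/4, 1/4, 1/4, 0;
     1/4, 0, 1/4, 0, 1/4, 1/4;
     1/4, 1/4, 0, 1/4, 0, 1/4;
     1/4, 0, 1/4, 0, 1/4, 1/4;
     1/4, 1/4, 0, 1/4, 0, 1/4;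
     0, 1/4, 1/4, 1/4, 1/4, 0]

open Filter Topology

theorem pow_succ_add_smul_of_orthogonal {𝕜 R : Type*} [CommSemiring 𝕜] [Semiring R]
    [Algebra 𝕜 R] {P Q : R} (hP : IsIdempotentElem P) (hQ : IsIdempotentElem Q)
    (hPQ : P * Q = 0) (hQP : Q * P = 0) (c : 𝕜) (n : ℕ) :
    (P + c • Q) ^ (n + 1) = P + c ^ (n + 1) • Q := by
  induction n with
  | zero => simp
  | succ n ih =>
    rw [pow_succ, ih, add_mul, mul_add, mul_add, hP.eq, mul_smul_comm, hPQ, smul_mul_assoc, hQP,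
      smul_mul_smul_comm, hQ.eq, pow_succ c (n + 1)]
    simp

theorem tendsto_pow_add_smul_of_orthogonal {𝕜 R : Type*} [SeminormedCommRing 𝕜] [Semiring R]
    [Algebra 𝕜 R] [TopologicalSpace R] [ContinuousAdd R] [ContinuousSMul 𝕜 R]
    {P Q : R} (hP : IsIdempotentElem P) (hQ : IsIdempotentElem Q) (hPQ : P * Q = 0)
    (hQP : Q * P = 0) {c : 𝕜} (hc : ‖c‖ < 1) :
    Tendsto (fun n ↦ (P + c • Q) ^ n) atTop (𝓝 P) := by
  rw [← tendsto_add_atTop_iff_nat 1]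
  simp_rw [pow_succ_add_smul_of_orthogonal hP hQ hPQ hQP]
  have hcn : Tendsto (fun n ↦ c ^ (n + 1)) atTop (𝓝 0) :=
    (tendsto_add_atTop_iff_nat 1).2 (tendsto_pow_atTop_nhds_zero_of_norm_lt_one hc)
  simpa using tendsto_const_nhds.add (hcn.smul_const Q)

noncomputable def cubeP : Matrix (Fin 6) (Fin 6) ℝ := of fun _ _ ↦ 1 / 6

noncomputable def cubeQ : Matrix (Fin 6) (Fin 6) ℝ := (2 : ℝ) • (cubeP - cubeA)

theorem cubeA_eq_cubeP_add_smul_cubeQ : cubeA = cubeP + (-1 / 2 : ℝ) • cubeQ := by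
  rw [cubeQ]
  module

theorem isIdempotentElem_cubeP : IsIdempotentElem cubeP := by
  ext
  simp [cubeP, mul_apply]

theorem cubeA_mul_cubeP : cubeA * cubeP = cubeP := by
  ext i
  fin_cases i <;> simp [cubeA, cubeP, mul_apply, Fin.sum_univ_succ] <;> norm_num

theorem cubeP_mul_cubeA : cubeP * cubeA = cubeP := by
  ext _ j
  fin_cases j <;> simp [cubeA, cubeP, mul_apply, Fin.sum_univ_succ] <;> norm_num

theorem cubeA_mul_cubeA : cubeA * cubeA = (3 / 2 : ℝ) • cubeP - (1 / 2 : ℝ) • cubeA := by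
  ext i j
  fin_cases i <;> fin_cases j <;> simp [cubeA, cubeP, mul_apply, Fin.sum_univ_succ] <;> norm_num

theorem isIdempotentElem_cubeQ : IsIdempotentElem cubeQ := by
  simp only [IsIdempotentElem, cubeQ, smul_mul_smul_comm, sub_mul, mul_sub,
    isIdempotentElem_cubeP.eq, cubeA_mul_cubeP, cubeP_mul_cubeA, cubeA_mul_cubeA]
  module

theorem cubeP_mul_cubeQ : cubeP * cubeQ = 0 := by
  simp only [cubeQ, mul_smul_comm, mul_sub, isIdempotentElem_cubeP.eq, cubeP_mul_cubeA, sub_self,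
    smul_zero]

theorem cubeQ_mul_cubeP : cubeQ * cubeP = 0 := by
  simp only [cubeQ, smul_mul_assoc, sub_mul, isIdempotentElem_cubeP.eq, cubeA_mul_cubeP, sub_self,
    smul_zero]

theorem cubeP_mulVec (v : Fin 6 → ℝ) : cubeP *ᵥ v = fun _ ↦ 1 / 6 * ∑ i, v i := by
  ext
  simp [cubeP, mulVec, dotProduct, Finset.mul_sum]

/-- The iterates A^n·v converge to the constant vector with every entry (1/6)·∑ v i. -/
theorem stmt_7 (v : Fin 6 → ℝ) :
    Filter.Tendsto (fun n : ℕ => (cubeA ^ n) *ᵥ v) Filter.atTop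
      (nhds (fun _ => (1/6) * ∑ i, v i)) := by
  have hpow : Tendsto (fun n ↦ cubeA ^ n) atTop (𝓝 cubeP) := by
    rw [cubeA_eq_cubeP_add_smul_cubeQ]
    exact tendsto_pow_add_smul_of_orthogonal isIdempotentElem_cubeP isIdempotentElem_cubeQ
      cubeP_mul_cubeQ cubeQ_mul_cubeP (by norm_num)
  rw [← cubeP_mulVec]
  exact ((continuous_id.matrix_mulVec continuous_const).tendsto cubeP).comp hpow
end

section
/- The powers A^n of the cube stealing matrix converge, as n → ∞, to the 6×6 matrix with all entries equal to 1/6. -/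
/-!
Writing `L` for the matrix with all entries `1/6`, the rows of `A` sum to `1`, so `A L = L`,
and a direct computation gives `A (A - L) = -(1/2) (A - L)`, i.e. `A - L` is an eigenvector of
left multiplication by `A` with eigenvalue `-1/2`. Hence `A^(n+1) = L + (-1/2)^n (A - L) → L`.
-/

open Matrix

open Filter Topology

theorem pow_succ_eq_add_smul_of_mul_sub_eq_smul {R M : Type*} [CommSemiring R] [Ring M]
    [Algebra R M] {a l : M} {c : R} (hl : a * l = l) (h : a * (a - l) = c • (a - l))
    (n : ℕ) : a ^ (n + 1) = l + c ^ n • (a - l) := by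
  induction n with
  | zero => simp
  | succ n ih => rw [pow_succ', ih, mul_add, hl, mul_smul_comm, h, smul_smul, ← pow_succ]

theorem tendsto_pow_of_mul_sub_eq_smul {𝕜 M : Type*} [NormedField 𝕜] [Ring M] [Algebra 𝕜 M]
    [TopologicalSpace M] [ContinuousAdd M] [ContinuousSMul 𝕜 M] {a l : M} {c : 𝕜}
    (hc : ‖c‖ < 1) (hl : a * l = l) (h : a * (a - l) = c • (a - l)) :
    Tendsto (a ^ ·) atTop (𝓝 l) := by
  rw [← tendsto_add_atTop_iff_nat 1]
  simp only [pow_succ_eq_add_smul_of_mul_sub_eq_smul hl h]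
  simpa using ((tendsto_pow_atTop_nhds_zero_of_norm_lt_one hc).smul_const (a - l)).const_add l

lemma cubeA_mul_uniform : cubeA * of (fun _ _ => (1/6 : ℝ)) = of fun _ _ => 1/6 := by
  ext i j
  fin_cases i <;> norm_num [cubeA, mul_apply, Fin.sum_univ_succ]

lemma cubeA_mul_sub_uniform :
    cubeA * (cubeA - of fun _ _ => 1/6) = (-1/2 : ℝ) • (cubeA - of fun _ _ => 1/6) := by
  rw [mul_sub, cubeA_mul_uniform]
  ext i j
  simp only [Matrix.sub_apply, Matrix.smul_apply, of_apply, mul_apply, Fin.sum_univ_succ]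
  fin_cases i <;> fin_cases j <;> simp [cubeA] <;> norm_num

/-- The powers A^n converge to the matrix with all entries 1/6. -/
theorem stmt_8 :
    Filter.Tendsto (fun n : ℕ => cubeA ^ n) Filter.atTop
      (nhds (Matrix.of fun _ _ => (1/6 : ℝ))) :=
  tendsto_pow_of_mul_sub_eq_smul (by norm_num) cubeA_mul_uniform cubeA_mul_sub_uniform
end

section
/- The set of eigenvalues of the cube stealing matrix A is exactly {1, -1/2, 0}, with 0 having geometric multiplicity 3, -1/2 having geometric multiplicity 2, and 1 having geometric multiplicity 1. -/
/-
Write `4 A = J - I - P`, with `J` the all-ones matrix and `P` the permutation swapping opposite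
faces. Then the all-ones vector has eigenvalue `1`, the vectors `e i - e j` for opposite faces
`i, j` (killed by `J`, negated by `P`) have eigenvalue `0`, and the `P`-invariant vectors of
total sum zero have eigenvalue `-1/2`. Since eigenspaces of distinct eigenvalues are independent,
their dimensions add up to at most `6 = 1 + 2 + 3`, so these lower bounds are equalities and
there is no room for a further eigenvalue.
-/

open Matrix

open Module

theorem iSupIndep.sum_finrank_le {K V ι : Type*} [DivisionRing K] [AddCommGroup V] [Module K V]
    [FiniteDimensional K V] {p : ι → Submodule K V} (hp : iSupIndep p) (s : Finset ι) :
    ∑ i ∈ s, finrank K (p i) ≤ finrank K V := by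
  classical
  have hs : iSupIndep (fun i : s => p i) := hp.comp Subtype.val_injective
  calc ∑ i ∈ s, finrank K (p i) = ∑ i : s, finrank K (p i) := (Finset.sum_coe_sort s _).symm
    _ = finrank K (DirectSum s fun i => p i) := (finrank_directSum K _).symm
    _ ≤ finrank K V := LinearMap.finrank_le_finrank_of_injective hs.dfinsupp_lsum_injective

theorem LinearIndependent.card_le_finrank_of_forall_mem {K V ι : Type*} [DivisionRing K]
    [AddCommGroup V] [Module K V] [FiniteDimensional K V] [Fintype ι] {v : ι → V}
    (hv : LinearIndependent K v) {p : Submodule K V} (hp : ∀ i, v i ∈ p) :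
    Fintype.card ι ≤ finrank K p :=
  (finrank_span_eq_card hv).symm.trans_le
    (Submodule.finrank_mono (Submodule.span_le.2 (Set.range_subset_iff.2 hp)))

theorem Module.End.sum_finrank_eigenspace_le {K V : Type*} [Field K] [AddCommGroup V]
    [Module K V] [FiniteDimensional K V] (f : End K V) (s : Finset K) :
    ∑ μ ∈ s, finrank K (f.eigenspace μ) ≤ finrank K V :=
  f.eigenspaces_iSupIndep.sum_finrank_le s

theorem Matrix.mem_eigenspace_mulVecLin_iff {n R : Type*} [Fintype n] [DecidableEq n] [CommRing R]
    {A : Matrix n n R} {μ : R} {v : n → R} :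
    v ∈ End.eigenspace A.mulVecLin μ ↔ A *ᵥ v = μ • v := by
  rw [End.mem_eigenspace_iff, mulVecLin_apply]

local notation "E" => Module.End.eigenspace (Matrix.mulVecLin cubeA)

theorem cubeA_three_le_finrank_eigenspace_zero : 3 ≤ finrank ℝ (E 0) := by
  have hv : LinearIndependent ℝ
      ![![(1 : ℝ), 0, 0, 0, 0, -1], ![0, 1, 0, -1, 0, 0], ![0, 0, 1, 0, -1, 0]] := by
    refine Fintype.linearIndependent_iff.2 fun g hg i => ?_
    fin_cases i
    · simpa [Fin.sum_univ_succ] using congrFun hg 0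
    · simpa [Fin.sum_univ_succ] using congrFun hg 1
    · simpa [Fin.sum_univ_succ] using congrFun hg 2
  refine hv.card_le_finrank_of_forall_mem fun i => mem_eigenspace_mulVecLin_iff.2 ?_
  ext j
  fin_cases i <;> fin_cases j <;> norm_num [cubeA, mulVec, dotProduct, Fin.sum_univ_succ]

theorem cubeA_two_le_finrank_eigenspace_neg_half : 2 ≤ finrank ℝ (E (-(1 / 2))) := by
  have hv : LinearIndependent ℝ ![![(1 : ℝ), -1, 0, -1, 0, 1], ![1, 0, -1, 0, -1, 1]] :=
    LinearIndependent.pair_iff.2 fun s t h =>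
      ⟨by simpa using congrFun h 1, by simpa using congrFun h 2⟩
  refine hv.card_le_finrank_of_forall_mem fun i => mem_eigenspace_mulVecLin_iff.2 ?_
  ext j
  fin_cases i <;> fin_cases j <;> norm_num [cubeA, mulVec, dotProduct, Fin.sum_univ_succ]

theorem cubeA_one_le_finrank_eigenspace_one : 1 ≤ finrank ℝ (E 1) := by
  have hv : LinearIndependent ℝ ![![(1 : ℝ), 1, 1, 1, 1, 1]] :=
    LinearIndependent.of_subsingleton 0 (by simp)
  refine hv.card_le_finrank_of_forall_mem fun i => mem_eigenspace_mulVecLin_iff.2 ?_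
  ext j
  fin_cases i; fin_cases j <;> norm_num [cubeA, mulVec, dotProduct, Fin.sum_univ_succ]

theorem cubeA_finrank_eigenspace_add_le {μ : ℝ} (h1 : μ ≠ 1) (hhalf : μ ≠ -(1 / 2)) (h0 : μ ≠ 0) :
    finrank ℝ (E 1) + finrank ℝ (E (-(1 / 2))) + finrank ℝ (E 0) + finrank ℝ (E μ) ≤ 6 := by
  have := End.sum_finrank_eigenspace_le cubeA.mulVecLin {1, -(1 / 2), 0, μ}
  rw [Finset.sum_insert (by norm_num [h1.symm]), Finset.sum_insert (by norm_num [hhalf.symm]),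
    Finset.sum_pair h0.symm, finrank_fin_fun] at this
  omega

/-- The eigenvalues of A are exactly 1, -1/2, 0, with geometric multiplicities
1, 2, 3 respectively. -/
theorem stmt_10 :
    (∀ μ : ℝ, Module.End.HasEigenvalue cubeA.mulVecLin μ ↔ (μ = 1 ∨ μ = -(1/2) ∨ μ = 0)) ∧
    Module.finrank ℝ (Module.End.eigenspace cubeA.mulVecLin 0) = 3 ∧
    Module.finrank ℝ (Module.End.eigenspace cubeA.mulVecLin (-(1/2))) = 2 ∧
    Module.finrank ℝ (Module.End.eigenspace cubeA.mulVecLin 1) = 1 := by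
  have h0 := cubeA_three_le_finrank_eigenspace_zero
  have hhalf := cubeA_two_le_finrank_eigenspace_neg_half
  have h1 := cubeA_one_le_finrank_eigenspace_one
  have hsum := cubeA_finrank_eigenspace_add_le (μ := 2) (by norm_num) (by norm_num) (by norm_num)
  refine ⟨fun μ => ?_, by omega, by omega, by omega⟩
  rw [End.hasEigenvalue_iff, ← Submodule.one_le_finrank_iff]
  constructor
  · intro hμ
    by_contra! hne
    have := cubeA_finrank_eigenspace_add_le hne.1 hne.2.1 hne.2.2
    omega
  · rintro (rfl | rfl | rfl) <;> omega
end
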